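/- Fix N ≥ 3, a signature function ε : Fin N → {1, −1}, and a natural number k ≥ 0. Define, for sufficiently differentiable g : ℂ^N → ℂ and indices A, B ∈ Fin N, the flat ambient tractor-D operators D_A g = (N − 1)·∂_A g + E(∂_A g) + Ē(∂_A g) − ε_A·conj(x_A)·Δg and D_{B̄} g = (N − 1)·∂_{B̄} g + E(∂_{B̄} g) + Ē(∂_{B̄} g) − ε_B·x_B·Δg. Let f : ℂ^N → ℂ be infinitely differentiable in the real sense and suppose that, at every point, Ef = ((k + 3 − N)/2)·f and Ēf = ((k + 3 − N)/2)·f. Then for all indices A, B and every point x: Δ^k( D_A(D_{B̄} f) )(x) = ε_A ε_B · conj(x_A) · x_B · (Δ^{k+2} f)(x). (This is Corollary 6.3 / Theorem 6.5 of the paper — the identity Δ^k D_A D_{B̄} = Z_A Z_{B̄} Δ^{k+2} + curvature terms, on densities of weight (−(n−1−k)/2, −(n−1−k)/2) with N = n + 2 — in the flat, curvature-free ambient space, where all curvature contributions and error terms vanish identically; it is the key step expressing the CR GJMS operators through tractor-D operators.) -/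

import Mathlib

open Finset

/-- Wirtinger derivative `∂_A f` of a function on `ℂ^N`, defined via the real Fréchet
derivative. -/
noncomputable def wder {N : ℕ} (f : (Fin N → ℂ) → ℂ) (A : Fin N) (x : Fin N → ℂ) : ℂ :=
  (1 / 2) * ((fderiv ℝ f x) (Pi.single A 1) - Complex.I * (fderiv ℝ f x) (Pi.single A Complex.I))

/-- Conjugate Wirtinger derivative `∂_{Ā} f`. -/
noncomputable def wderBar {N : ℕ} (f : (Fin N → ℂ) → ℂ) (A : Fin N) (x : Fin N → ℂ) : ℂ :=
  (1 / 2) * ((fderiv ℝ f x) (Pi.single A 1) + Complex.I * (fderiv ℝ f x) (Pi.single A Complex.I))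

/-- Holomorphic Euler operator `E f = ∑_A x_A ∂_A f`. -/
noncomputable def eulerE {N : ℕ} (f : (Fin N → ℂ) → ℂ) (x : Fin N → ℂ) : ℂ :=
  ∑ A, x A * wder f A x

/-- Antiholomorphic Euler operator `Ē f = ∑_A conj(x_A) ∂_{Ā} f`. -/
noncomputable def eulerEbar {N : ℕ} (f : (Fin N → ℂ) → ℂ) (x : Fin N → ℂ) : ℂ :=
  ∑ A, (starRingEnd ℂ) (x A) * wderBar f A x

/-- The flat ambient Laplacian `Δ f = ∑_A ε_A ∂_A ∂_{Ā} f` for a signature `ε`. -/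
noncomputable def ambLap {N : ℕ} (ε : Fin N → ℝ) (f : (Fin N → ℂ) → ℂ) (x : Fin N → ℂ) : ℂ :=
  ∑ A, (ε A : ℂ) * wder (fun y => wderBar f A y) A x

/-- The defining function of the null cone, `r(x) = ∑_A ε_A |x_A|²`. -/
noncomputable def rFun {N : ℕ} (ε : Fin N → ℝ) (x : Fin N → ℂ) : ℂ :=
  ∑ A, (ε A : ℂ) * (Complex.normSq (x A) : ℂ)

/-- The flat ambient tractor-D operator
`D_A g = (N−1)∂_A g + E(∂_A g) + Ē(∂_A g) − ε_A conj(x_A) Δg`. -/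
noncomputable def Dop {N : ℕ} (ε : Fin N → ℝ) (A : Fin N) (g : (Fin N → ℂ) → ℂ)
    (x : Fin N → ℂ) : ℂ :=
  ((N : ℂ) - 1) * wder g A x + eulerE (fun y => wder g A y) x +
    eulerEbar (fun y => wder g A y) x - (ε A : ℂ) * (starRingEnd ℂ) (x A) * ambLap ε g x

/-- The conjugate flat ambient tractor-D operator
`D_{B̄} g = (N−1)∂_{B̄} g + E(∂_{B̄} g) + Ē(∂_{B̄} g) − ε_B x_B Δg`. -/
noncomputable def DopBar {N : ℕ} (ε : Fin N → ℝ) (B : Fin N) (g : (Fin N → ℂ) → ℂ)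
    (x : Fin N → ℂ) : ℂ :=
  ((N : ℂ) - 1) * wderBar g B x + eulerE (fun y => wderBar g B y) x +
    eulerEbar (fun y => wderBar g B y) x - (ε B : ℂ) * x B * ambLap ε g x

/-!
For `f` of bidegree `(p, q)` the Euler terms of the tractor-D operators collapse to constants:
`D_{B̄} f = (m + 1) ∂_{B̄} f - ε_B x_B Δf` with `m = N - 3 + p + q`, which has bidegree
`(p, q - 1)`, and then `D_A D_{B̄} f = ddbarExpansion ε A B m f`, a combination of `∂_A ∂_{B̄} f`,
`Δf`, `∂_A Δf`, `∂_{B̄} Δf` and `Δ²f` with coordinate coefficients. The commutators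
`[Δ, x_B] = ε_B ∂_{B̄}` and `[Δ, conj x_A] = ε_A ∂_A`, together with `ε² = 1`, show that `Δ` lowers
`m` by one: `Δ (ddbarExpansion m f) = ddbarExpansion (m - 1) (Δf)`. For the weight in question
`m = k`, so after `k` Laplacians only the term `ε_A ε_B conj(x_A) x_B Δ^{k+2} f` survives.
-/

open scoped ContDiff ComplexConjugate
open Complex (I)

@[fun_prop]
theorem ContDiff.differentiableAt {𝕜 E F : Type*} [NontriviallyNormedField 𝕜]
    [NormedAddCommGroup E] [NormedSpace 𝕜 E] [NormedAddCommGroup F] [NormedSpace 𝕜 F]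
    {f : E → F} {n : WithTop ℕ∞} {x : E} (hf : ContDiff 𝕜 n f) (hn : n ≠ 0) :
    DifferentiableAt 𝕜 f x :=
  hf.differentiable hn x

variable {N : ℕ}

noncomputable def wirtinger (c : ℂ) (A : Fin N) (f : (Fin N → ℂ) → ℂ) (x : Fin N → ℂ) :
    ℂ :=
  (1 / 2) * (fderiv ℝ f x (Pi.single A 1) + c * fderiv ℝ f x (Pi.single A I))

theorem wder_eq_wirtinger (f : (Fin N → ℂ) → ℂ) (A : Fin N) :
    wder f A = wirtinger (-I) A f := by
  ext x
  simp only [wder, wirtinger]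
  ring

theorem wderBar_eq_wirtinger (f : (Fin N → ℂ) → ℂ) (A : Fin N) :
    wderBar f A = wirtinger I A f :=
  rfl

section Wirtinger

variable {c d : ℂ} {A B : Fin N} {f g : (Fin N → ℂ) → ℂ} {x : Fin N → ℂ}

theorem wirtinger_add (hf : DifferentiableAt ℝ f x) (hg : DifferentiableAt ℝ g x) :
    wirtinger c A (fun y => f y + g y) x = wirtinger c A f x + wirtinger c A g x := by
  simp only [wirtinger, fderiv_fun_add hf hg, add_apply]
  ring

theorem wirtinger_sub (hf : DifferentiableAt ℝ f x) (hg : DifferentiableAt ℝ g x) :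
    wirtinger c A (fun y => f y - g y) x = wirtinger c A f x - wirtinger c A g x := by
  simp only [wirtinger, fderiv_fun_sub hf hg, sub_apply]
  ring

theorem wirtinger_const_mul (hf : DifferentiableAt ℝ f x) (a : ℂ) :
    wirtinger c A (fun y => a * f y) x = a * wirtinger c A f x := by
  simp only [wirtinger, fderiv_const_mul hf, smul_apply, smul_eq_mul]
  ring

theorem wirtinger_mul (hf : DifferentiableAt ℝ f x) (hg : DifferentiableAt ℝ g x) :
    wirtinger c A (fun y => f y * g y) x = wirtinger c A f x * g x + f x * wirtinger c A g x := by
  simp only [wirtinger, fderiv_fun_mul hf hg, add_apply, smul_apply, smul_eq_mul]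
  ring

theorem wirtinger_sum {ι : Type*} {s : Finset ι} {F : ι → (Fin N → ℂ) → ℂ}
    (hF : ∀ i ∈ s, DifferentiableAt ℝ (F i) x) :
    wirtinger c A (fun y => ∑ i ∈ s, F i y) x = ∑ i ∈ s, wirtinger c A (F i) x := by
  simp only [wirtinger, fderiv_fun_sum hF, _root_.sum_apply, mul_sum, ← sum_add_distrib]

theorem wirtinger_apply (B : Fin N) :
    wirtinger c A (fun y => y B) x = if A = B then (1 + c * I) / 2 else 0 := by
  rw [wirtinger, (hasFDerivAt_apply B x).fderiv]
  rcases eq_or_ne A B with rfl | h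
  · simp only [ContinuousLinearMap.proj_apply, Pi.single_eq_same, if_true]
    ring
  · simp [h]

theorem wirtinger_conj_apply (B : Fin N) :
    wirtinger c A (fun y => conj (y B)) x = if A = B then (1 - c * I) / 2 else 0 := by
  rw [wirtinger, show (fun y : Fin N → ℂ => conj (y B)) = fun y => star (y B) from rfl,
    fderiv_star, (hasFDerivAt_apply B x).fderiv]
  rcases eq_or_ne A B with rfl | h
  · simp only [ContinuousLinearMap.comp_apply, ContinuousLinearMap.proj_apply,
      ContinuousLinearEquiv.coe_coe, starL'_apply, Pi.single_eq_same, star_one, RCLike.star_def,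
      Complex.conj_I, if_true]
    ring
  · simp [h]

@[fun_prop]
theorem ContDiff.wirtinger (hf : ContDiff ℝ ∞ f) : ContDiff ℝ ∞ (wirtinger c A f) := by
  have : ContDiff ℝ ∞ (fderiv ℝ f) := hf.fderiv_right (by simp)
  unfold _root_.wirtinger
  fun_prop

theorem fderiv_wirtinger (hf : ContDiff ℝ 2 f) (v : Fin N → ℂ) :
    fderiv ℝ (wirtinger c A f) x v = (1 / 2) * (fderiv ℝ (fderiv ℝ f) x v (Pi.single A 1)
      + c * fderiv ℝ (fderiv ℝ f) x v (Pi.single A I)) := by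
  have h : Differentiable ℝ (fderiv ℝ f) :=
    (hf.fderiv_right (m := 1) le_rfl).differentiable one_ne_zero
  unfold wirtinger
  rw [fderiv_const_mul (by fun_prop), fderiv_fun_add (by fun_prop) (by fun_prop),
    fderiv_const_mul (by fun_prop), fderiv_clm_apply (h x) (differentiableAt_const _),
    fderiv_clm_apply (h x) (differentiableAt_const _)]
  simp only [fderiv_fun_const, Pi.zero_apply, ContinuousLinearMap.comp_zero, zero_add, smul_add,
    add_apply, smul_apply, ContinuousLinearMap.flip_apply, smul_eq_mul]
  ring

theorem wirtinger_comm (hf : ContDiff ℝ 2 f) :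
    wirtinger c A (wirtinger d B f) x = wirtinger d B (wirtinger c A f) x := by
  have hsymm := (hf.contDiffAt (x := x)).isSymmSndFDerivAt (by simp)
  rw [wirtinger.eq_1 c A (wirtinger d B f), wirtinger.eq_1 d B (wirtinger c A f)]
  simp only [fderiv_wirtinger hf, hsymm.eq (Pi.single A _)]
  ring

end Wirtinger

section Wder

variable {A B : Fin N} {f g : (Fin N → ℂ) → ℂ} {x : Fin N → ℂ}

theorem wder_apply : wder (fun y => y B) A x = if A = B then 1 else 0 := by
  rw [wder_eq_wirtinger, wirtinger_apply]
  simp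

theorem wderBar_apply : wderBar (fun y => y B) A x = 0 := by
  rw [wderBar_eq_wirtinger, wirtinger_apply]
  simp

theorem wder_conj_apply : wder (fun y => conj (y B)) A x = 0 := by
  rw [wder_eq_wirtinger, wirtinger_conj_apply]
  simp

theorem wderBar_conj_apply : wderBar (fun y => conj (y B)) A x = if A = B then 1 else 0 := by
  rw [wderBar_eq_wirtinger, wirtinger_conj_apply]
  simp

@[fun_prop]
theorem ContDiff.wder (hf : ContDiff ℝ ∞ f) : ContDiff ℝ ∞ (wder f A) := by
  rw [wder_eq_wirtinger]
  fun_prop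

@[fun_prop]
theorem ContDiff.wderBar (hf : ContDiff ℝ ∞ f) : ContDiff ℝ ∞ (wderBar f A) :=
  hf.wirtinger

@[fun_prop]
theorem contDiff_conj_apply : ContDiff ℝ ∞ (fun y : Fin N → ℂ => conj (y B)) :=
  Complex.conjCLE.contDiff.comp (contDiff_apply ℝ ℂ B)

theorem wder_add (hf : DifferentiableAt ℝ f x) (hg : DifferentiableAt ℝ g x) :
    wder (fun y => f y + g y) A x = wder f A x + wder g A x := by
  simp only [wder_eq_wirtinger, wirtinger_add hf hg]

theorem wderBar_add (hf : DifferentiableAt ℝ f x) (hg : DifferentiableAt ℝ g x) :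
    wderBar (fun y => f y + g y) A x = wderBar f A x + wderBar g A x :=
  wirtinger_add hf hg

theorem wder_sub (hf : DifferentiableAt ℝ f x) (hg : DifferentiableAt ℝ g x) :
    wder (fun y => f y - g y) A x = wder f A x - wder g A x := by
  simp only [wder_eq_wirtinger, wirtinger_sub hf hg]

theorem wderBar_sub (hf : DifferentiableAt ℝ f x) (hg : DifferentiableAt ℝ g x) :
    wderBar (fun y => f y - g y) A x = wderBar f A x - wderBar g A x :=
  wirtinger_sub hf hg

theorem wder_const_mul (hf : DifferentiableAt ℝ f x) (a : ℂ) :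
    wder (fun y => a * f y) A x = a * wder f A x := by
  simp only [wder_eq_wirtinger, wirtinger_const_mul hf]

theorem wderBar_const_mul (hf : DifferentiableAt ℝ f x) (a : ℂ) :
    wderBar (fun y => a * f y) A x = a * wderBar f A x :=
  wirtinger_const_mul hf a

theorem wder_sum {ι : Type*} {s : Finset ι} {F : ι → (Fin N → ℂ) → ℂ}
    (hF : ∀ i ∈ s, DifferentiableAt ℝ (F i) x) :
    wder (fun y => ∑ i ∈ s, F i y) A x = ∑ i ∈ s, wder (F i) A x := by
  simp only [wder_eq_wirtinger, wirtinger_sum hF]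

theorem wderBar_sum {ι : Type*} {s : Finset ι} {F : ι → (Fin N → ℂ) → ℂ}
    (hF : ∀ i ∈ s, DifferentiableAt ℝ (F i) x) :
    wderBar (fun y => ∑ i ∈ s, F i y) A x = ∑ i ∈ s, wderBar (F i) A x :=
  wirtinger_sum hF

theorem wder_mul (hf : DifferentiableAt ℝ f x) (hg : DifferentiableAt ℝ g x) :
    wder (fun y => f y * g y) A x = wder f A x * g x + f x * wder g A x := by
  simp only [wder_eq_wirtinger, wirtinger_mul hf hg]

theorem wderBar_mul (hf : DifferentiableAt ℝ f x) (hg : DifferentiableAt ℝ g x) :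
    wderBar (fun y => f y * g y) A x = wderBar f A x * g x + f x * wderBar g A x :=
  wirtinger_mul hf hg

theorem wder_apply_mul (hg : DifferentiableAt ℝ g x) :
    wder (fun y => y B * g y) A x = (if A = B then 1 else 0) * g x + x B * wder g A x := by
  rw [wder_mul (by fun_prop) hg, wder_apply]

theorem wderBar_apply_mul (hg : DifferentiableAt ℝ g x) :
    wderBar (fun y => y B * g y) A x = x B * wderBar g A x := by
  rw [wderBar_mul (by fun_prop) hg, wderBar_apply, zero_mul, zero_add]

theorem wder_conj_apply_mul (hg : DifferentiableAt ℝ g x) :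
    wder (fun y => conj (y B) * g y) A x = conj (x B) * wder g A x := by
  rw [wder_mul (by fun_prop) hg, wder_conj_apply, zero_mul, zero_add]

theorem wderBar_conj_apply_mul (hg : DifferentiableAt ℝ g x) :
    wderBar (fun y => conj (y B) * g y) A x
      = (if A = B then 1 else 0) * g x + conj (x B) * wderBar g A x := by
  rw [wderBar_mul (by fun_prop) hg, wderBar_conj_apply]

theorem wder_wder_comm (hf : ContDiff ℝ 2 f) : wder (wder f B) A x = wder (wder f A) B x := by
  simp only [wder_eq_wirtinger, wirtinger_comm hf]

theorem wder_wderBar_comm (hf : ContDiff ℝ 2 f) :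
    wder (wderBar f B) A x = wderBar (wder f A) B x := by
  simp only [wder_eq_wirtinger, wderBar_eq_wirtinger, wirtinger_comm hf]

theorem wderBar_wderBar_comm (hf : ContDiff ℝ 2 f) :
    wderBar (wderBar f B) A x = wderBar (wderBar f A) B x :=
  wirtinger_comm hf

end Wder

section Laplacian

variable {ε : Fin N → ℝ} {c : ℂ} {A B : Fin N} {f g : (Fin N → ℂ) → ℂ}
  {x : Fin N → ℂ}

@[fun_prop]
theorem ContDiff.ambLap (hf : ContDiff ℝ ∞ f) : ContDiff ℝ ∞ (ambLap ε f) := by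
  unfold _root_.ambLap
  fun_prop

theorem contDiff_iterate_ambLap (hf : ContDiff ℝ ∞ f) (j : ℕ) :
    ContDiff ℝ ∞ ((ambLap ε)^[j] f) := by
  induction j with
  | zero => exact hf
  | succ j ih => rw [Function.iterate_succ_apply']; exact ih.ambLap

theorem wirtinger_ambLap (hf : ContDiff ℝ ∞ f) :
    wirtinger c A (ambLap ε f) x = ambLap ε (wirtinger c A f) x := by
  have hC2 : ∀ {g : (Fin N → ℂ) → ℂ}, ContDiff ℝ ∞ g → ContDiff ℝ 2 g :=
    fun hg => hg.of_le (by norm_cast)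
  unfold ambLap
  simp only [wder_eq_wirtinger, wderBar_eq_wirtinger]
  rw [wirtinger_sum (fun C _ => by fun_prop (disch := simp))]
  refine sum_congr rfl fun C _ => ?_
  rw [wirtinger_const_mul (by fun_prop (disch := simp)), wirtinger_comm (hC2 (by fun_prop))]
  congr 2
  exact funext fun y => wirtinger_comm (hC2 hf)

theorem ambLap_wder (hf : ContDiff ℝ ∞ f) : ambLap ε (wder f A) = wder (ambLap ε f) A := by
  ext x
  rw [wder_eq_wirtinger, wder_eq_wirtinger, wirtinger_ambLap hf]

theorem ambLap_wderBar (hf : ContDiff ℝ ∞ f) :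
    ambLap ε (wderBar f A) = wderBar (ambLap ε f) A :=
  funext fun _ => (wirtinger_ambLap hf).symm

theorem ambLap_add (hf : ContDiff ℝ ∞ f) (hg : ContDiff ℝ ∞ g) :
    ambLap ε (fun y => f y + g y) x = ambLap ε f x + ambLap ε g x := by
  simp (disch := fun_prop (disch := simp)) only [ambLap, wderBar_add, wder_add, mul_add,
    sum_add_distrib]

theorem ambLap_sub (hf : ContDiff ℝ ∞ f) (hg : ContDiff ℝ ∞ g) :
    ambLap ε (fun y => f y - g y) x = ambLap ε f x - ambLap ε g x := by
  simp (disch := fun_prop (disch := simp)) only [ambLap, wderBar_sub, wder_sub, mul_sub,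
    sum_sub_distrib]

theorem ambLap_const_mul (hf : ContDiff ℝ ∞ f) (a : ℂ) :
    ambLap ε (fun y => a * f y) x = a * ambLap ε f x := by
  simp (disch := fun_prop (disch := simp)) only [ambLap, wderBar_const_mul, wder_const_mul,
    mul_sum]
  exact sum_congr rfl fun C _ => by ring

theorem ambLap_apply_mul (hg : ContDiff ℝ ∞ g) :
    ambLap ε (fun y => y B * g y) x = ε B * wderBar g B x + x B * ambLap ε g x := by
  simp (disch := fun_prop (disch := simp)) only [ambLap, wderBar_apply_mul, wder_apply_mul,
    mul_add, sum_add_distrib]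
  simp only [ite_mul, one_mul, zero_mul, mul_ite, mul_zero, sum_ite_eq', mem_univ, if_true,
    add_right_inj, mul_sum]
  exact sum_congr rfl fun C _ => mul_left_comm _ _ _

theorem ambLap_conj_apply_mul (hg : ContDiff ℝ ∞ g) :
    ambLap ε (fun y => conj (y A) * g y) x = ε A * wder g A x + conj (x A) * ambLap ε g x := by
  simp (disch := fun_prop (disch := simp)) only [ambLap, wderBar_conj_apply_mul, wder_add,
    wder_const_mul, wder_conj_apply_mul, mul_add, sum_add_distrib]
  simp only [ite_mul, one_mul, zero_mul, mul_ite, mul_zero, sum_ite_eq', mem_univ, if_true,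
    add_right_inj, mul_sum]
  exact sum_congr rfl fun C _ => mul_left_comm _ _ _

end Laplacian

section Euler

variable {A B : Fin N} {f g : (Fin N → ℂ) → ℂ} {x : Fin N → ℂ}

theorem eulerE_sub (hf : ContDiff ℝ ∞ f) (hg : ContDiff ℝ ∞ g) :
    eulerE (fun y => f y - g y) x = eulerE f x - eulerE g x := by
  simp (disch := fun_prop (disch := simp)) only [eulerE, wder_sub, mul_sub, sum_sub_distrib]

theorem eulerEbar_sub (hf : ContDiff ℝ ∞ f) (hg : ContDiff ℝ ∞ g) :
    eulerEbar (fun y => f y - g y) x = eulerEbar f x - eulerEbar g x := by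
  simp (disch := fun_prop (disch := simp)) only [eulerEbar, wderBar_sub, mul_sub,
    sum_sub_distrib]

theorem eulerE_const_mul (hf : ContDiff ℝ ∞ f) (a : ℂ) :
    eulerE (fun y => a * f y) x = a * eulerE f x := by
  simp (disch := fun_prop (disch := simp)) only [eulerE, wder_const_mul, mul_sum, mul_left_comm]

theorem eulerEbar_const_mul (hf : ContDiff ℝ ∞ f) (a : ℂ) :
    eulerEbar (fun y => a * f y) x = a * eulerEbar f x := by
  simp (disch := fun_prop (disch := simp)) only [eulerEbar, wderBar_const_mul, mul_sum,
    mul_left_comm]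

theorem eulerE_sum {ι : Type*} {s : Finset ι} {F : ι → (Fin N → ℂ) → ℂ}
    (hF : ∀ i ∈ s, ContDiff ℝ ∞ (F i)) :
    eulerE (fun y => ∑ i ∈ s, F i y) x = ∑ i ∈ s, eulerE (F i) x := by
  simp only [eulerE, wder_sum fun i hi => (hF i hi).differentiableAt (by simp), mul_sum]
  exact sum_comm

theorem eulerEbar_sum {ι : Type*} {s : Finset ι} {F : ι → (Fin N → ℂ) → ℂ}
    (hF : ∀ i ∈ s, ContDiff ℝ ∞ (F i)) :
    eulerEbar (fun y => ∑ i ∈ s, F i y) x = ∑ i ∈ s, eulerEbar (F i) x := by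
  simp only [eulerEbar, wderBar_sum fun i hi => (hF i hi).differentiableAt (by simp), mul_sum]
  exact sum_comm

theorem eulerE_apply_mul (hg : ContDiff ℝ ∞ g) :
    eulerE (fun y => y B * g y) x = x B * g x + x B * eulerE g x := by
  simp (disch := fun_prop (disch := simp)) only [eulerE, wder_apply_mul, mul_add,
    sum_add_distrib, ite_mul, one_mul, zero_mul, mul_ite, mul_zero, sum_ite_eq', mem_univ,
    if_true, mul_sum, mul_left_comm]

theorem eulerEbar_apply_mul (hg : ContDiff ℝ ∞ g) :
    eulerEbar (fun y => y B * g y) x = x B * eulerEbar g x := by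
  simp (disch := fun_prop (disch := simp)) only [eulerEbar, wderBar_apply_mul, mul_sum,
    mul_left_comm]

theorem wder_eulerE (hf : ContDiff ℝ ∞ f) :
    wder (eulerE f) A x = wder f A x + eulerE (wder f A) x := by
  rw [show eulerE f = fun y => ∑ C, y C * wder f C y from rfl,
    wder_sum fun C _ => by fun_prop (disch := simp)]
  simp (disch := fun_prop (disch := simp)) only [wder_apply_mul, ite_mul, one_mul,
    zero_mul, sum_add_distrib, sum_ite_eq, mem_univ, if_true, eulerE]
  exact congrArg _ (sum_congr rfl fun C _ => by rw [wder_wder_comm (hf.of_le (by norm_cast))])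

theorem wder_eulerEbar (hf : ContDiff ℝ ∞ f) :
    wder (eulerEbar f) A x = eulerEbar (wder f A) x := by
  rw [show eulerEbar f = fun y => ∑ C, conj (y C) * wderBar f C y from rfl,
    wder_sum fun C _ => by fun_prop (disch := simp)]
  simp (disch := fun_prop (disch := simp)) only [wder_conj_apply_mul, eulerEbar]
  exact sum_congr rfl fun C _ => by rw [wder_wderBar_comm (hf.of_le (by norm_cast))]

theorem wderBar_eulerE (hf : ContDiff ℝ ∞ f) :
    wderBar (eulerE f) A x = eulerE (wderBar f A) x := by
  rw [show eulerE f = fun y => ∑ C, y C * wder f C y from rfl,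
    wderBar_sum fun C _ => by fun_prop (disch := simp)]
  simp (disch := fun_prop (disch := simp)) only [wderBar_apply_mul, eulerE]
  exact sum_congr rfl fun C _ => by rw [wder_wderBar_comm (hf.of_le (by norm_cast))]

theorem wderBar_eulerEbar (hf : ContDiff ℝ ∞ f) :
    wderBar (eulerEbar f) A x = wderBar f A x + eulerEbar (wderBar f A) x := by
  rw [show eulerEbar f = fun y => ∑ C, conj (y C) * wderBar f C y from rfl,
    wderBar_sum fun C _ => by fun_prop (disch := simp)]
  simp (disch := fun_prop (disch := simp)) only [wderBar_conj_apply_mul, ite_mul, one_mul,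
    zero_mul, sum_add_distrib, sum_ite_eq, mem_univ, if_true, eulerEbar]
  exact congrArg _ (sum_congr rfl fun C _ => by
    rw [wderBar_wderBar_comm (hf.of_le (by norm_cast))])

end Euler

def IsBihomogeneous (p q : ℂ) (f : (Fin N → ℂ) → ℂ) : Prop :=
  (∀ x, eulerE f x = p * f x) ∧ ∀ x, eulerEbar f x = q * f x

namespace IsBihomogeneous

variable {ε : Fin N → ℝ} {p q : ℂ} {A B : Fin N} {f g : (Fin N → ℂ) → ℂ}

theorem wder (h : IsBihomogeneous p q f) (hf : ContDiff ℝ ∞ f) (A : Fin N) :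
    IsBihomogeneous (p - 1) q (_root_.wder f A) := by
  refine ⟨fun x => ?_, fun x => ?_⟩
  · have := wder_eulerE (A := A) (x := x) hf
    rw [funext h.1, wder_const_mul (hf.differentiableAt (by simp))] at this
    linear_combination -this
  · rw [← wder_eulerEbar hf, funext h.2, wder_const_mul (hf.differentiableAt (by simp))]

theorem wderBar (h : IsBihomogeneous p q f) (hf : ContDiff ℝ ∞ f) (B : Fin N) :
    IsBihomogeneous p (q - 1) (_root_.wderBar f B) := by
  refine ⟨fun x => ?_, fun x => ?_⟩
  · rw [← wderBar_eulerE hf, funext h.1, wderBar_const_mul (hf.differentiableAt (by simp))]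
  · have := wderBar_eulerEbar (A := B) (x := x) hf
    rw [funext h.2, wderBar_const_mul (hf.differentiableAt (by simp))] at this
    linear_combination -this

theorem const_mul (h : IsBihomogeneous p q f) (hf : ContDiff ℝ ∞ f) (a : ℂ) :
    IsBihomogeneous p q (fun y => a * f y) :=
  ⟨fun x => by rw [eulerE_const_mul hf, h.1]; ring,
    fun x => by rw [eulerEbar_const_mul hf, h.2]; ring⟩

theorem sub (hf' : IsBihomogeneous p q f) (hg' : IsBihomogeneous p q g) (hf : ContDiff ℝ ∞ f)
    (hg : ContDiff ℝ ∞ g) : IsBihomogeneous p q (fun y => f y - g y) :=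
  ⟨fun x => by rw [eulerE_sub hf hg, hf'.1, hg'.1]; ring,
    fun x => by rw [eulerEbar_sub hf hg, hf'.2, hg'.2]; ring⟩

theorem sum {ι : Type*} {s : Finset ι} {F : ι → (Fin N → ℂ) → ℂ}
    (h : ∀ i ∈ s, IsBihomogeneous p q (F i)) (hF : ∀ i ∈ s, ContDiff ℝ ∞ (F i)) :
    IsBihomogeneous p q (fun y => ∑ i ∈ s, F i y) :=
  ⟨fun x => by rw [eulerE_sum hF, mul_sum]; exact sum_congr rfl fun i hi => (h i hi).1 x,
    fun x => by rw [eulerEbar_sum hF, mul_sum]; exact sum_congr rfl fun i hi => (h i hi).2 x⟩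

theorem apply_mul (h : IsBihomogeneous p q g) (hg : ContDiff ℝ ∞ g) (B : Fin N) :
    IsBihomogeneous (p + 1) q (fun y => y B * g y) :=
  ⟨fun x => by rw [eulerE_apply_mul hg, h.1]; ring,
    fun x => by rw [eulerEbar_apply_mul hg, h.2]; ring⟩

theorem ambLap (h : IsBihomogeneous p q f) (hf : ContDiff ℝ ∞ f) :
    IsBihomogeneous (p - 1) (q - 1) (ambLap ε f) :=
  sum (fun C _ => ((h.wderBar hf C).wder (by fun_prop) C).const_mul (by fun_prop) _)
    (fun C _ => by fun_prop)

end IsBihomogeneous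

section Tractor

variable {ε : Fin N → ℝ} {p q : ℂ} {A B : Fin N} {f g : (Fin N → ℂ) → ℂ}
  {x : Fin N → ℂ}

theorem Dop_of_isBihomogeneous (h : IsBihomogeneous p q g) (hg : ContDiff ℝ ∞ g) :
    Dop ε A g x = (N - 2 + p + q) * wder g A x - ε A * conj (x A) * ambLap ε g x := by
  rw [Dop, (h.wder hg A).1, (h.wder hg A).2]
  ring

theorem DopBar_of_isBihomogeneous (h : IsBihomogeneous p q g) (hg : ContDiff ℝ ∞ g) :
    DopBar ε B g x = (N - 2 + p + q) * wderBar g B x - ε B * x B * ambLap ε g x := by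
  rw [DopBar, (h.wderBar hg B).1, (h.wderBar hg B).2]
  ring

noncomputable def ddbarExpansion (ε : Fin N → ℝ) (A B : Fin N) (m : ℂ)
    (f : (Fin N → ℂ) → ℂ) (x : Fin N → ℂ) : ℂ :=
  m * (m + 1) * wder (wderBar f B) A x
    - m * ε B * ((if A = B then 1 else 0) * ambLap ε f x + x B * wder (ambLap ε f) A x)
    - m * ε A * (conj (x A) * wderBar (ambLap ε f) B x)
    + ε A * ε B * (conj (x A) * (x B * ambLap ε (ambLap ε f) x))

theorem Dop_DopBar (hB : ε B ^ 2 = 1) (h : IsBihomogeneous p q f) (hf : ContDiff ℝ ∞ f) :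
    Dop ε A (fun y => DopBar ε B f y) x = ddbarExpansion ε A B (N - 3 + p + q) f x := by
  set G : (Fin N → ℂ) → ℂ :=
    fun y => (N - 2 + p + q) * wderBar f B y - ε B * (y B * ambLap ε f y)
  have hG : (fun y => DopBar ε B f y) = G := funext fun y => by
    rw [DopBar_of_isBihomogeneous h hf]; ring
  have hGhom : IsBihomogeneous p (q - 1) G := by
    refine ((h.wderBar hf B).const_mul (by fun_prop) _).sub ?_ (by fun_prop) (by fun_prop)
    simpa using ((h.ambLap hf).apply_mul (by fun_prop) B).const_mul (by fun_prop) (ε B : ℂ)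
  have hB' : (ε B : ℂ) ^ 2 = 1 := by exact_mod_cast hB
  rw [hG, Dop_of_isBihomogeneous hGhom (by fun_prop)]
  simp (disch := fun_prop (disch := simp)) only [G, wder_sub, wder_const_mul, wder_apply_mul,
    ambLap_sub, ambLap_const_mul, ambLap_apply_mul, ambLap_wderBar hf, ddbarExpansion]
  linear_combination ε A * conj (x A) * wderBar (ambLap ε f) B x * hB'

theorem ambLap_ddbarExpansion (hA : ε A ^ 2 = 1) (hB : ε B ^ 2 = 1) (hf : ContDiff ℝ ∞ f)
    (m : ℂ) :
    ambLap ε (ddbarExpansion ε A B m f) x = ddbarExpansion ε A B (m - 1) (ambLap ε f) x := by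
  have hA' : (ε A : ℂ) ^ 2 = 1 := by exact_mod_cast hA
  have hB' : (ε B : ℂ) ^ 2 = 1 := by exact_mod_cast hB
  unfold ddbarExpansion
  simp (disch := fun_prop (disch := simp)) only [ambLap_add, ambLap_sub, ambLap_const_mul,
    ambLap_apply_mul, ambLap_conj_apply_mul, wder_apply_mul, ambLap_wderBar, ambLap_wder]
  rw [← wder_wderBar_comm ((hf.ambLap).of_le (by norm_cast))]
  linear_combination (ε B * ((if A = B then 1 else 0) * ambLap ε (ambLap ε f) x
      + x B * wder (ambLap ε (ambLap ε f)) A x) - m * wder (wderBar (ambLap ε f) B) A x) * hA'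
    + (ε A * (conj (x A) * wderBar (ambLap ε (ambLap ε f)) B x)
      - m * wder (wderBar (ambLap ε f) B) A x) * hB'

theorem iterate_ambLap_ddbarExpansion (hA : ε A ^ 2 = 1) (hB : ε B ^ 2 = 1)
    (hf : ContDiff ℝ ∞ f) (m : ℂ) (j : ℕ) :
    (ambLap ε)^[j] (ddbarExpansion ε A B m f) =
      ddbarExpansion ε A B (m - j) ((ambLap ε)^[j] f) := by
  induction j with
  | zero => simp
  | succ j ih =>
    ext x
    rw [Function.iterate_succ_apply', ih,
      ambLap_ddbarExpansion hA hB (contDiff_iterate_ambLap hf j), Function.iterate_succ_apply']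
    congr 1
    push_cast
    ring

theorem ddbarExpansion_zero :
    ddbarExpansion ε A B 0 f x = ε A * ε B * conj (x A) * x B * ambLap ε (ambLap ε f) x := by
  simp only [ddbarExpansion]
  ring

end Tractor

theorem lap_pow_DA_DBbar_general (N : ℕ) (ε : Fin N → ℝ)
    (hε : ∀ A, ε A = 1 ∨ ε A = -1) (k : ℕ)
    (f : (Fin N → ℂ) → ℂ) (hf : ContDiff ℝ (⊤ : ℕ∞) f)
    (hE : ∀ x : Fin N → ℂ, eulerE f x = (((k : ℂ) + 3 - N) / 2) * f x)
    (hEbar : ∀ x : Fin N → ℂ, eulerEbar f x = (((k : ℂ) + 3 - N) / 2) * f x)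
    (A B : Fin N) (x : Fin N → ℂ) :
    (ambLap ε)^[k] (fun y => Dop ε A (fun z => DopBar ε B f z) y) x =
      (ε A : ℂ) * (ε B : ℂ) * (starRingEnd ℂ) (x A) * x B * (ambLap ε)^[k + 2] f x := by
  have hA : ε A ^ 2 = 1 := sq_eq_one_iff.mpr (hε A)
  have hB : ε B ^ 2 = 1 := sq_eq_one_iff.mpr (hε B)
  have hDD : (fun y => Dop ε A (fun z => DopBar ε B f z) y) = ddbarExpansion ε A B k f := by
    ext y
    convert Dop_DopBar hB ⟨hE, hEbar⟩ hf using 2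
    ring
  rw [hDD, iterate_ambLap_ddbarExpansion hA hB hf, sub_self, ddbarExpansion_zero,
    Function.iterate_succ_apply', Function.iterate_succ_apply']

/-- The flat, curvature-free case of the identity `Δ^k D_A D_{B̄} = Z_A Z_{B̄} Δ^{k+2}`
(Corollary 6.3 / Theorem 6.5 of the paper) on densities of bidegree
`((k+3−N)/2, (k+3−N)/2)`, the key step expressing the CR GJMS operators through
tractor-D operators. -/
theorem lap_pow_DA_DBbar (N : ℕ) (hN : 3 ≤ N) (ε : Fin N → ℝ)
    (hε : ∀ A, ε A = 1 ∨ ε A = -1) (k : ℕ)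
    (f : (Fin N → ℂ) → ℂ) (hf : ContDiff ℝ (⊤ : ℕ∞) f)
    (hE : ∀ x : Fin N → ℂ, eulerE f x = (((k : ℂ) + 3 - N) / 2) * f x)
    (hEbar : ∀ x : Fin N → ℂ, eulerEbar f x = (((k : ℂ) + 3 - N) / 2) * f x)
    (A B : Fin N) (x : Fin N → ℂ) :
    (ambLap ε)^[k] (fun y => Dop ε A (fun z => DopBar ε B f z) y) x =
      (ε A : ℂ) * (ε B : ℂ) * (starRingEnd ℂ) (x A) * x B * (ambLap ε)^[k + 2] f x :=
  lap_pow_DA_DBbar_general N ε hε k f hf hE hEbar A B x
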